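/- arXiv:2509.10514 — 3 statements merged into one kernel-verified Lean document; each statement's English description precedes it below -/
import Mathlib

section
/- Let F : ℝ^m → ℝ^n be a C^∞ map. Suppose (1) for every x ∈ ℝ^m, the rank of the Fréchet derivative fderiv ℝ F x (the dimension of its range) is at most k, and (2) there exist q ∈ ℝ^n and p ∈ A := F⁻¹({q}) such that the rank of fderiv ℝ F p equals k. Then there exist an open neighborhood Ũ of p such that for every s ∈ A ∩ Ũ there are an open set U₂ ∋ s, an open set V ⊆ ℝ^m, and a C^∞ diffeomorphism φ : U₂ → V with φ(s) = 0 and φ(U₂ ∩ A) = V ∩ (ℝ^{m−k} × {0}^{k}); in particular A ∩ Ũ is an (m−k)-dimensional C^∞ submanifold of ℝ^m. -/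
set_option maxHeartbeats 1000000

open ContinuousLinearMap Topology Filter


/-- If `F : ℝ^m → ℝ^n` is `C^∞`, has derivative rank `≤ k` everywhere,
and rank exactly `k` at some point `p` of the level set `A = F⁻¹({q})`, then near `p` the
level set is an `(m−k)`-dimensional `C^∞` submanifold of `ℝ^m`: around every point `s` of
`A` near `p` there is a smooth chart (a `C^∞` diffeomorphism onto an open set) sending `s`
to `0` and flattening `A` onto the slice `ℝ^{m−k} × {0}^k`. -/
theorem statement1 {m n k : ℕ}
    (F : (Fin m → ℝ) → (Fin n → ℝ)) (hF : ContDiff ℝ (⊤ : ℕ∞) F)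
    (hrank_le : ∀ x : Fin m → ℝ,
      Module.finrank ℝ (LinearMap.range (fderiv ℝ F x : (Fin m → ℝ) →ₗ[ℝ] (Fin n → ℝ))) ≤ k)
    (q : Fin n → ℝ) (p : Fin m → ℝ) (hp : p ∈ F ⁻¹' {q})
    (hrank_eq : Module.finrank ℝ (LinearMap.range (fderiv ℝ F p : (Fin m → ℝ) →ₗ[ℝ] (Fin n → ℝ))) = k) :
    ∃ U₀ : Set (Fin m → ℝ), IsOpen U₀ ∧ p ∈ U₀ ∧
      ∀ s ∈ F ⁻¹' {q} ∩ U₀,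
        ∃ (U₂ V : Set (Fin m → ℝ)) (φ ψ : (Fin m → ℝ) → (Fin m → ℝ)),
          IsOpen U₂ ∧ s ∈ U₂ ∧ IsOpen V ∧
          ContDiffOn ℝ (⊤ : ℕ∞) φ U₂ ∧ ContDiffOn ℝ (⊤ : ℕ∞) ψ V ∧
          Set.BijOn φ U₂ V ∧
          (∀ x ∈ U₂, ψ (φ x) = x) ∧ (∀ y ∈ V, φ (ψ y) = y) ∧
          φ s = 0 ∧
          φ '' (U₂ ∩ F ⁻¹' {q}) =
            V ∩ {y : Fin m → ℝ | ∀ i : Fin m, m - k ≤ (i : ℕ) → y i = 0} := by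
  classical
  have hkm : k ≤ m := by
    have h1 := LinearMap.finrank_range_le (fderiv ℝ F p : (Fin m → ℝ) →ₗ[ℝ] (Fin n → ℝ))
    rw [Module.finrank_fin_fun] at h1
    rw [← hrank_eq]
    exact h1
  set T := fderiv ℝ F p with hT
  set R : Submodule ℝ (Fin n → ℝ) := LinearMap.range (T : (Fin m → ℝ) →ₗ[ℝ] (Fin n → ℝ)) with hR
  obtain ⟨C, hC⟩ := Submodule.exists_isCompl R
  set bR : Module.Basis (Fin k) ℝ R := Module.finBasisOfFinrankEq ℝ R hrank_eq with hbR
  set L : (Fin n → ℝ) →L[ℝ] (Fin k → ℝ) :=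
    LinearMap.toContinuousLinearMap
      (bR.equivFun.toLinearMap ∘ₗ R.linearProjOfIsCompl C hC) with hL
  have hLT : Function.Surjective (L.comp T) := by
    intro z
    obtain ⟨v, hv⟩ := (bR.equivFun.symm z : R).2
    refine ⟨v, ?_⟩
    show L (T v) = z
    have hmem : T v ∈ R := LinearMap.mem_range_self _ v
    have : R.linearProjOfIsCompl C hC (T v) = ⟨T v, hmem⟩ :=
      Submodule.linearProjOfIsCompl_apply_left hC ⟨T v, hmem⟩
    show bR.equivFun (R.linearProjOfIsCompl C hC (T v)) = z
    rw [this]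
    have : (⟨T v, hmem⟩ : R) = bR.equivFun.symm z := Subtype.ext hv
    rw [this, LinearEquiv.apply_symm_apply]
  obtain ⟨S₀ℓ, hS₀ℓ⟩ := ((L.comp T) : (Fin m → ℝ) →ₗ[ℝ] (Fin k → ℝ)).exists_rightInverse_of_surjective
    (LinearMap.range_eq_top.2 hLT)
  set S₀ : (Fin k → ℝ) →L[ℝ] (Fin m → ℝ) := LinearMap.toContinuousLinearMap S₀ℓ with hS₀
  set U₀ : Set (Fin m → ℝ) := {x | IsUnit ((L.comp (fderiv ℝ F x)).comp S₀)} with hU₀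
  have hU₀open : IsOpen U₀ := by
    show IsOpen ((fun x => (L.comp (fderiv ℝ F x)).comp S₀) ⁻¹' {u | IsUnit u})
    exact Units.isOpen.preimage ((continuous_const.clm_comp (hF.continuous_fderiv (by simp))).clm_comp
      continuous_const)
  have hpU₀ : p ∈ U₀ := by
    show IsUnit ((L.comp (fderiv ℝ F p)).comp S₀)
    have : (L.comp (fderiv ℝ F p)).comp S₀ = ContinuousLinearMap.id ℝ (Fin k → ℝ) := by
      refine ContinuousLinearMap.ext fun z => ?_
      exact LinearMap.ext_iff.1 hS₀ℓ z
    rw [this, ← ContinuousLinearMap.one_def]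
    exact isUnit_one
  have hsurjU₀ : ∀ x ∈ U₀, Function.Surjective (L.comp (fderiv ℝ F x)) := by
    intro x hx z
    obtain ⟨u, hu⟩ := hx
    refine ⟨S₀ ((↑u⁻¹ : (Fin k → ℝ) →L[ℝ] (Fin k → ℝ)) z), ?_⟩
    have h2 : (↑u : (Fin k → ℝ) →L[ℝ] (Fin k → ℝ)) ((↑u⁻¹ : (Fin k → ℝ) →L[ℝ] (Fin k → ℝ)) z) = z := by
      rw [← ContinuousLinearMap.comp_apply, ← ContinuousLinearMap.mul_def, u.mul_inv,
        ContinuousLinearMap.one_apply]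
    rw [hu] at h2
    exact h2
  -- kernel lemma
  have key_ker : ∀ x : Fin m → ℝ, Function.Surjective (L.comp (fderiv ℝ F x)) →
      ∀ v : Fin m → ℝ, L (fderiv ℝ F x v) = 0 → fderiv ℝ F x v = 0 := by
    intro x hsurj v hv
    set D := fderiv ℝ F x with hD
    set W : Submodule ℝ (Fin n → ℝ) := LinearMap.range (D : (Fin m → ℝ) →ₗ[ℝ] (Fin n → ℝ)) with hW
    have hWle : Module.finrank ℝ W ≤ k := hrank_le x
    set Lr : W →ₗ[ℝ] (Fin k → ℝ) := (L : (Fin n → ℝ) →ₗ[ℝ] (Fin k → ℝ)).domRestrict W with hLr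
    have hLr_surj : Function.Surjective Lr := by
      intro z
      obtain ⟨v', hv'⟩ := hsurj z
      exact ⟨⟨D v', LinearMap.mem_range_self _ v'⟩, hv'⟩
    have hWk : Module.finrank ℝ W = k := by
      have h1 := LinearMap.finrank_range_le Lr
      rw [LinearMap.range_eq_top.2 hLr_surj, finrank_top, Module.finrank_fin_fun] at h1
      omega
    have hLr_inj : Function.Injective Lr :=
      (LinearMap.injective_iff_surjective_of_finrank_eq_finrank
        (by rw [hWk, Module.finrank_fin_fun])).2 hLr_surj
    have h2 : Lr ⟨D v, LinearMap.mem_range_self _ v⟩ = Lr 0 := by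
      rw [map_zero]; exact hv
    have h3 := hLr_inj h2
    exact congrArg Subtype.val h3
  have hFdiff : ∀ x, HasFDerivAt F (fderiv ℝ F x) x :=
    fun x => ((hF.differentiable (by simp)) x).hasFDerivAt
  refine ⟨U₀, hU₀open, hpU₀, ?_⟩
  rintro s ⟨hsA, hsU₀⟩
  have hFs : F s = q := hsA
  -- the linearized data at s
  set B : (Fin m → ℝ) →L[ℝ] (Fin k → ℝ) := L.comp (fderiv ℝ F s) with hB
  have hBsurj : Function.Surjective B := hsurjU₀ s hsU₀
  set Bℓ : (Fin m → ℝ) →ₗ[ℝ] (Fin k → ℝ) := (B : (Fin m → ℝ) →ₗ[ℝ] (Fin k → ℝ)) with hBℓ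
  obtain ⟨Sℓ, hSℓ⟩ := Bℓ.exists_rightInverse_of_surjective
    (LinearMap.range_eq_top (f := Bℓ) |>.2 hBsurj)
  have hBS : ∀ w, Bℓ (Sℓ w) = w := fun w => LinearMap.ext_iff.1 hSℓ w
  set K : Submodule ℝ (Fin m → ℝ) := LinearMap.ker Bℓ with hK
  have hKrank : Module.finrank ℝ K = m - k := by
    have h1 := LinearMap.finrank_range_add_finrank_ker Bℓ
    rw [LinearMap.range_eq_top (f := Bℓ) |>.2 hBsurj, finrank_top, Module.finrank_fin_fun,
      Module.finrank_fin_fun] at h1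
    rw [hK]
    omega
  set uK : K ≃ₗ[ℝ] (Fin (m - k) → ℝ) :=
    LinearEquiv.ofFinrankEq _ _ (by rw [hKrank, Module.finrank_fin_fun]) with huK
  set πK : (Fin m → ℝ) →ₗ[ℝ] K :=
    LinearMap.codRestrict K (LinearMap.id - Sℓ ∘ₗ Bℓ) (fun v => by
      simp only [LinearMap.mem_ker, K] at *
      simp [LinearMap.sub_apply, map_sub, hBS]) with hπK
  set M : (Fin m → ℝ) →L[ℝ] (Fin (m - k) → ℝ) :=
    LinearMap.toContinuousLinearMap (uK.toLinearMap ∘ₗ πK) with hM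
  -- the nonlinear chart and its derivative
  set Gf : (Fin m → ℝ) → (Fin k → ℝ) := fun x => L (F x) with hGf
  set q' : Fin k → ℝ := Gf s with hq'
  set φ : (Fin m → ℝ) → (Fin m → ℝ) := fun x i =>
    if h : (i : ℕ) < m - k then M (x - s) ⟨i, h⟩
    else Gf x ⟨(i : ℕ) - (m - k), by have := i.isLt; omega⟩
      - q' ⟨(i : ℕ) - (m - k), by have := i.isLt; omega⟩ with hφdef
  set Afam : ∀ _ : Fin m, (Fin m → ℝ) →L[ℝ] ℝ := fun i =>
    if h : (i : ℕ) < m - k then (ContinuousLinearMap.proj (⟨i, h⟩ : Fin (m - k))).comp M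
    else (ContinuousLinearMap.proj
      (⟨(i : ℕ) - (m - k), by have := i.isLt; omega⟩ : Fin k)).comp B with hAfam
  set A' : (Fin m → ℝ) →L[ℝ] (Fin m → ℝ) := ContinuousLinearMap.pi Afam with hA'
  have hA'app : ∀ v i, A' v i = Afam i v := fun v i => rfl
  have hφcd : ContDiff ℝ (⊤ : ℕ∞) φ := by
    rw [hφdef]
    apply contDiff_pi.2
    intro i
    by_cases h : (i : ℕ) < m - k
    · simp only [dif_pos h]
      exact (((ContinuousLinearMap.proj (⟨i, h⟩ : Fin (m - k))).comp M).contDiff).comp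
        (contDiff_id.sub contDiff_const)
    · simp only [dif_neg h]
      exact ((((ContinuousLinearMap.proj _).comp L).contDiff).comp hF).sub contDiff_const
  have hGder : HasFDerivAt Gf B s := L.hasFDerivAt.comp s (hFdiff s)
  have hφder : HasFDerivAt φ A' s := by
    apply hasFDerivAt_pi''
    intro i
    rw [hA', ContinuousLinearMap.proj_pi, hAfam]
    by_cases h : (i : ℕ) < m - k
    · simp only [hφdef, dif_pos h]
      set c := (ContinuousLinearMap.proj (⟨i, h⟩ : Fin (m - k))).comp M with hc
      have h2 : HasFDerivAt (fun x : Fin m → ℝ => c (x - s))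
          (c.comp (ContinuousLinearMap.id ℝ (Fin m → ℝ))) s :=
        HasFDerivAt.comp s (c.hasFDerivAt) ((hasFDerivAt_id s).sub_const s)
      rw [ContinuousLinearMap.comp_id] at h2
      exact h2
    · simp only [hφdef, dif_neg h]
      exact (((ContinuousLinearMap.proj _).hasFDerivAt).comp s hGder).sub_const _
  -- A' is a linear isomorphism
  have hA'zero : ∀ v, A' v = 0 → v = 0 := by
    intro v hv
    have hBv : Bℓ v = 0 := by
      funext j
      have hii : (m - k + (j : ℕ)) < m := by have := j.isLt; omega
      have h0 := congrFun hv ⟨m - k + (j : ℕ), hii⟩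
      rw [hA'app] at h0
      simp only [hAfam] at h0
      rw [dif_neg (show ¬((((⟨m - k + (j : ℕ), hii⟩ : Fin m)) : ℕ) < m - k) by
        show ¬(m - k + (j : ℕ) < m - k); omega)] at h0
      have hjj : (⟨(((⟨m - k + (j : ℕ), hii⟩ : Fin m)) : ℕ) - (m - k), by omega⟩ : Fin k) = j :=
        Fin.ext (show m - k + (j : ℕ) - (m - k) = (j : ℕ) by omega)
      rw [hjj] at h0
      exact (by simpa using h0 : B v j = 0)
    have hMv : M v = 0 := by
      funext i'
      have hii : ((i' : ℕ)) < m := by have := i'.isLt; omega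
      have h0 := congrFun hv ⟨(i' : ℕ), hii⟩
      rw [hA'app] at h0
      simp only [hAfam] at h0
      rw [dif_pos (by simpa using i'.isLt)] at h0
      have hjj : (⟨(((⟨(i' : ℕ), hii⟩ : Fin m)) : ℕ), by simpa using i'.isLt⟩ : Fin (m - k)) = i' :=
        Fin.ext rfl
      rw [hjj] at h0
      simpa using h0
    have hπ : πK v = 0 := by
      have : uK (πK v) = 0 := by
        have : (uK.toLinearMap ∘ₗ πK) v = 0 := by
          rw [hM] at hMv
          simpa using hMv
        simpa using this
      simpa using uK.map_eq_zero_iff.1 this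
    have hπv := congrArg Subtype.val hπ
    simp only [hπK, LinearMap.codRestrict_apply, LinearMap.sub_apply, LinearMap.id_apply,
      LinearMap.comp_apply, ZeroMemClass.coe_zero] at hπv
    rw [hBv, map_zero] at hπv
    simpa [sub_zero] using hπv
  have hA'inj : Function.Injective A' := by
    intro v w hvw
    have h0 : A' (v - w) = 0 := by rw [map_sub, hvw, sub_self]
    exact sub_eq_zero.1 (hA'zero _ h0)
  have hA'surj : Function.Surjective ((A' : (Fin m → ℝ) →ₗ[ℝ] (Fin m → ℝ))) :=
    (LinearMap.injective_iff_surjective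
      (f := (A' : (Fin m → ℝ) →ₗ[ℝ] (Fin m → ℝ)))).1 hA'inj
  set eqA : (Fin m → ℝ) ≃L[ℝ] (Fin m → ℝ) :=
    (LinearEquiv.ofBijective (A' : (Fin m → ℝ) →ₗ[ℝ] (Fin m → ℝ))
      ⟨hA'inj, hA'surj⟩).toContinuousLinearEquiv with heqA
  have heqAcoe : (eqA : (Fin m → ℝ) →L[ℝ] (Fin m → ℝ)) = A' :=
    ContinuousLinearMap.ext fun v => rfl
  have hφder' : HasFDerivAt φ ((eqA : (Fin m → ℝ) →L[ℝ] (Fin m → ℝ))) s := by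
    rw [heqAcoe]; exact hφder
  -- the chart
  have hφContAt : ContDiffAt ℝ (⊤ : ℕ∞) φ s := hφcd.contDiffAt
  set Φ := hφContAt.toOpenPartialHomeomorph φ hφder' (by simp) with hΦ
  have hs_source : s ∈ Φ.source := hφContAt.mem_toOpenPartialHomeomorph_source hφder' (by simp)
  have hφs : φ s = 0 := by
    funext i
    simp only [hφdef]
    by_cases h : (i : ℕ) < m - k
    · rw [dif_pos h]; simp
    · rw [dif_neg h]; simp [hq']
  have h0target : (0 : Fin m → ℝ) ∈ Φ.target := by
    have := hφContAt.image_mem_toOpenPartialHomeomorph_target hφder' (by simp)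
    rwa [hφs] at this
  set ψ : (Fin m → ℝ) → (Fin m → ℝ) := ⇑Φ.symm with hψ
  have hψ0 : ψ 0 = s := by
    rw [← hφs]; exact Φ.left_inv hs_source
  have hψ0' : Φ.symm (0 : Fin m → ℝ) = s := hψ0
  have hψcont : ContDiffAt ℝ (⊤ : ℕ∞) ψ 0 := by
    apply Φ.contDiffAt_symm (f₀' := eqA) h0target ?_ ?_
    · rw [hψ0']; exact hφder'
    · rw [hψ0']; exact hφContAt
  obtain ⟨u0, hu0, hψu0⟩ : ∃ u ∈ 𝓝 (0 : Fin m → ℝ), ContDiffOn ℝ (⊤ : ℕ∞) ψ u := by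
    set W : Set (Fin m → ℝ) := {x | fderiv ℝ φ x ∈
      Set.range ((↑) : ((Fin m → ℝ) ≃L[ℝ] (Fin m → ℝ)) → (Fin m → ℝ) →L[ℝ] (Fin m → ℝ))} with hW
    have hWopen : IsOpen W :=
      ContinuousLinearEquiv.isOpen.preimage (hφcd.continuous_fderiv (by simp))
    refine ⟨Φ.target ∩ ψ ⁻¹' W, ?_, ?_⟩
    · refine (Φ.isOpen_inter_preimage_symm hWopen).mem_nhds ⟨h0target, ?_⟩
      show ψ 0 ∈ W
      simp only [hW, Set.mem_setOf_eq]
      rw [hψ0, hφder'.fderiv]; exact ⟨eqA, rfl⟩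
    · intro z hz
      obtain ⟨e, he⟩ := hz.2
      apply ContDiffAt.contDiffWithinAt
      apply Φ.contDiffAt_symm (f₀' := e) hz.1
      · rw [he]; exact (hφcd.differentiable (by simp) _).hasFDerivAt
      · exact hφcd.contDiffAt
  obtain ⟨o, ho_sub, ho_open, ho_mem⟩ := mem_nhds_iff.1 hu0
  have hψo : ContDiffOn ℝ (⊤ : ℕ∞) ψ o := hψu0.mono ho_sub
  have hN : (Φ.target ∩ o) ∩ {z | ψ z ∈ U₀} ∈ 𝓝 (0 : Fin m → ℝ) := by
    refine Filter.inter_mem (Filter.inter_mem (Φ.open_target.mem_nhds h0target)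
      (ho_open.mem_nhds ho_mem)) ?_
    exact hψcont.continuousAt.preimage_mem_nhds (by rw [hψ0]; exact hU₀open.mem_nhds hsU₀)
  obtain ⟨ε, hε, hball⟩ := Metric.mem_nhds_iff.1 hN
  set V : Set (Fin m → ℝ) := Metric.ball 0 ε with hV
  have hVtarget : V ⊆ Φ.target := fun z hz => ((hball hz).1).1
  have hVo : V ⊆ o := fun z hz => ((hball hz).1).2
  have hVU₀ : ∀ z ∈ V, ψ z ∈ U₀ := fun z hz => (hball hz).2
  set U₂ : Set (Fin m → ℝ) := Φ.source ∩ φ ⁻¹' V with hU₂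
  have hU₂open : IsOpen U₂ := Φ.open_source.inter (Metric.isOpen_ball.preimage hφcd.continuous)
  have hsU₂ : s ∈ U₂ := ⟨hs_source, by
    rw [Set.mem_preimage, hφs]; exact Metric.mem_ball_self hε⟩
  have hVopen : IsOpen V := Metric.isOpen_ball
  have hψV : ∀ z ∈ V, ψ z ∈ U₂ ∧ φ (ψ z) = z := by
    intro z hz
    have h1 : φ (ψ z) = z := Φ.right_inv (hVtarget hz)
    exact ⟨⟨Φ.map_target (hVtarget hz), by rw [Set.mem_preimage, h1]; exact hz⟩, h1⟩
  have hbij : Set.BijOn φ U₂ V := ⟨fun x hx => hx.2, Φ.injOn.mono Set.inter_subset_left,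
    fun z hz => ⟨ψ z, (hψV z hz).1, (hψV z hz).2⟩⟩
  -- the projection onto the last k coordinates
  set P : (Fin m → ℝ) →L[ℝ] (Fin k → ℝ) := ContinuousLinearMap.pi
    (fun j : Fin k => ContinuousLinearMap.proj
      (⟨m - k + (j : ℕ), by have := j.isLt; omega⟩ : Fin m)) with hP
  have hGψ : Set.EqOn (fun z => Gf (ψ z)) (fun z => P z + q') V := by
    intro z hz
    funext j
    have hii : m - k + (j : ℕ) < m := by have := j.isLt; omega
    have h1 := congrFun ((hψV z hz).2) ⟨m - k + (j : ℕ), hii⟩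
    simp only [hφdef] at h1
    rw [dif_neg (show ¬((((⟨m - k + (j : ℕ), hii⟩ : Fin m)) : ℕ) < m - k) by
      show ¬(m - k + (j : ℕ) < m - k); omega)] at h1
    have hjj : (⟨(((⟨m - k + (j : ℕ), hii⟩ : Fin m)) : ℕ) - (m - k), by omega⟩ : Fin k) = j :=
      Fin.ext (show m - k + (j : ℕ) - (m - k) = (j : ℕ) by omega)
    rw [hjj] at h1
    show Gf (ψ z) j = (P z + q') j
    have hPz : P z j = z ⟨m - k + (j : ℕ), hii⟩ := rfl
    rw [Pi.add_apply, hPz]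
    linarith [h1]
  refine ⟨U₂, V, φ, ψ, hU₂open, hsU₂, hVopen, hφcd.contDiffOn, hψo.mono hVo, hbij,
    fun x hx => Φ.left_inv hx.1, fun z hz => (hψV z hz).2, hφs, ?_⟩
  apply Set.Subset.antisymm
  · rintro y ⟨x, ⟨hxU₂, hxA⟩, rfl⟩
    refine ⟨hxU₂.2, ?_⟩
    intro i hi
    have hFx : F x = q := hxA
    simp only [hφdef]
    rw [dif_neg (by omega)]
    simp only [hq', hGf]
    rw [hFx, hFs, sub_self]
  · rintro y ⟨hyV, hy0⟩
    have hxmem := (hψV y hyV).1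
    have hxeq := (hψV y hyV).2
    refine ⟨ψ y, ⟨hxmem, ?_⟩, hxeq⟩
    show F (ψ y) = q
    set g : ℝ → (Fin n → ℝ) := fun t => F (ψ (t • y)) with hg
    have hty : ∀ t ∈ Set.Icc (0:ℝ) 1, t • y ∈ V := by
      intro t ht
      rw [hV, mem_ball_zero_iff]
      have hyn : ‖y‖ < ε := mem_ball_zero_iff.1 hyV
      calc ‖t • y‖ = ‖t‖ * ‖y‖ := norm_smul t y
        _ ≤ 1 * ‖y‖ := by
            apply mul_le_mul_of_nonneg_right _ (norm_nonneg y)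
            rw [Real.norm_eq_abs, abs_le]; exact ⟨by linarith [ht.1], ht.2⟩
        _ < ε := by rw [one_mul]; exact hyn
    have hgder : ∀ t ∈ Set.Icc (0:ℝ) 1, HasDerivAt g 0 t := by
      intro t ht
      have hzV : t • y ∈ V := hty t ht
      have hψz : HasFDerivAt ψ (fderiv ℝ ψ (t • y)) (t • y) :=
        (((hψo (t • y) (hVo hzV)).contDiffAt (ho_open.mem_nhds (hVo hzV))).differentiableAt
          (by simp)).hasFDerivAt
      have h1 : HasDerivAt (fun u : ℝ => u • y) y t := by
        have := (hasDerivAt_id t).smul_const y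
        rwa [one_smul] at this
      have h2 : HasDerivAt (fun u : ℝ => ψ (u • y)) (fderiv ℝ ψ (t • y) y) t :=
        hψz.comp_hasDerivAt t h1
      have h3 : HasDerivAt g (fderiv ℝ F (ψ (t • y)) (fderiv ℝ ψ (t • y) y)) t :=
        (hFdiff (ψ (t • y))).comp_hasDerivAt t h2
      have hw0 : fderiv ℝ F (ψ (t • y)) (fderiv ℝ ψ (t • y) y) = 0 := by
        apply key_ker (ψ (t • y)) (hsurjU₀ _ (hVU₀ _ hzV))
        have h4 : HasFDerivAt (fun z => Gf (ψ z))
            ((L.comp (fderiv ℝ F (ψ (t • y)))).comp (fderiv ℝ ψ (t • y))) (t • y) :=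
          (L.hasFDerivAt.comp (ψ (t • y)) (hFdiff (ψ (t • y)))).comp (t • y) hψz
        have h5 : HasFDerivAt (fun z : Fin m → ℝ => P z + q') P (t • y) :=
          P.hasFDerivAt.add_const q'
        have h6 : HasFDerivAt (fun z => Gf (ψ z)) P (t • y) :=
          h5.congr_of_eventuallyEq
            (Filter.eventuallyEq_of_mem (hVopen.mem_nhds hzV) hGψ)
        have h7 := h4.unique h6
        have h8 := ContinuousLinearMap.ext_iff.1 h7 y
        have hPy : P y = 0 := by
          funext j
          have hii : m - k + (j : ℕ) < m := by have := j.isLt; omega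
          have h9 : P y j = y ⟨m - k + (j : ℕ), hii⟩ := rfl
          simp only [Pi.zero_apply]
          rw [h9]
          exact hy0 ⟨m - k + (j : ℕ), hii⟩ (by show m - k ≤ m - k + (j : ℕ); omega)
        rw [hPy] at h8
        exact h8
      rw [hw0] at h3
      exact h3
    have hcont : ContinuousOn g (Set.Icc 0 1) :=
      fun t ht => (hgder t ht).continuousAt.continuousWithinAt
    have hconst := constant_of_has_deriv_right_zero hcont
      (fun t ht => (hgder t (Set.Ico_subset_Icc_self ht)).hasDerivWithinAt) 1
      (Set.right_mem_Icc.2 zero_le_one)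
    have hg1 : g 1 = F (ψ y) := by
      show F (ψ ((1:ℝ) • y)) = F (ψ y); rw [one_smul]
    have hg0 : g 0 = q := by
      show F (ψ ((0:ℝ) • y)) = q; rw [zero_smul, hψ0, hFs]
    rw [← hg1, hconst, hg0]
end

section
/- Consider F : ℝ^n → ℝ^n with components f_i(x) = s(W_i·x + b_i) − A_i·x, where W_i, A_i are the i-th rows of real n×n matrices W, A, b ∈ ℝ^n, and s : ℝ → ℝ is C^∞ (so each f_i and F are C^∞). Suppose the linear span of {f₁, …, f_n} in the space of functions ℝ^n → ℝ has dimension exactly k, and there exists x₀ with F(x₀) = 0 at which the rank of fderiv ℝ F x₀ equals k. Then near x₀ the solution set X = F⁻¹({0}) is an (n−k)-dimensional C^∞ submanifold of ℝ^n: there exist an open neighborhood Ũ of x₀ such that for every point of X ∩ Ũ there are an open set U₂ containing it, an open set V ⊆ ℝ^n, and a C^∞ diffeomorphism φ : U₂ → V mapping the point to 0 with φ(U₂ ∩ X) = V ∩ (ℝ^{n−k} × {0}^{k}). -/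
open Set Submodule Module

/-- **Attractor Dimension Estimate.** For the network map with components
`f i x = s (W_i·x + b i) − A_i·x` (`s : ℝ → ℝ` a `C^∞` activation, `W_i`, `A_i` the rows of
`W`, `A`), if the span of `{f₁, …, f_n}` in the function space has dimension exactly `k` and
there is an equilibrium `x₀` (`F x₀ = 0`) at which the rank of `fderiv ℝ F x₀` equals `k`,
then near `x₀` the solution set `X = F⁻¹({0})` is an `(n−k)`-dimensional `C^∞` submanifold
of `ℝ^n`. -/
theorem statement6 {n k : ℕ}
    (W A : Matrix (Fin n) (Fin n) ℝ) (b : Fin n → ℝ)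
    (s : ℝ → ℝ) (hs : ContDiff ℝ (⊤ : ℕ∞) s)
    (f : Fin n → (Fin n → ℝ) → ℝ)
    (hfdef : ∀ i x, f i x = s (W.mulVec x i + b i) - A.mulVec x i)
    (F : (Fin n → ℝ) → (Fin n → ℝ))
    (hFdef : ∀ x i, F x i = f i x)
    (hspan : Module.finrank ℝ (Submodule.span ℝ (Set.range f)) = k)
    (x₀ : Fin n → ℝ) (hx₀ : F x₀ = 0)
    (hrank_eq : Module.finrank ℝ (LinearMap.range (fderiv ℝ F x₀ : (Fin n → ℝ) →ₗ[ℝ] (Fin n → ℝ))) = k) :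
    ∃ U₀ : Set (Fin n → ℝ), IsOpen U₀ ∧ x₀ ∈ U₀ ∧
      ∀ s' ∈ U₀ ∩ F ⁻¹' {0},
        ∃ (U₂ V : Set (Fin n → ℝ)) (φ ψ : (Fin n → ℝ) → (Fin n → ℝ)),
          IsOpen U₂ ∧ s' ∈ U₂ ∧ IsOpen V ∧
          ContDiffOn ℝ (⊤ : ℕ∞) φ U₂ ∧ ContDiffOn ℝ (⊤ : ℕ∞) ψ V ∧
          Set.BijOn φ U₂ V ∧
          (∀ x ∈ U₂, ψ (φ x) = x) ∧ (∀ y ∈ V, φ (ψ y) = y) ∧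
          φ s' = 0 ∧
          φ '' (U₂ ∩ F ⁻¹' {0}) =
            V ∩ {y : Fin n → ℝ | ∀ i : Fin n, n - k ≤ (i : ℕ) → y i = 0} := by
  classical
  have le1 : (1 : WithTop ℕ∞) ≤ ⊤ := le_top
  -- smoothness of the coordinate functions
  have hmv : ∀ (M : Matrix (Fin n) (Fin n) ℝ) (i : Fin n),
      ContDiff ℝ (⊤ : ℕ∞) (fun x : Fin n → ℝ => M.mulVec x i) := by
    intro M i
    have h : (fun x : Fin n → ℝ => M.mulVec x i) = fun x => ∑ j, M i j * x j := by
      funext x; simp [Matrix.mulVec, dotProduct]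
    rw [h]
    exact ContDiff.sum fun j _ =>
      contDiff_const.mul ((ContinuousLinearMap.proj j : (Fin n → ℝ) →L[ℝ] ℝ).contDiff)
  have hfs : ∀ i, ContDiff ℝ (⊤ : ℕ∞) (f i) := by
    intro i
    have h : f i = fun x => s (W.mulVec x i + b i) - A.mulVec x i := funext fun x => hfdef i x
    rw [h]
    exact (hs.comp ((hmv W i).add contDiff_const)).sub (hmv A i)
  have hkn : k ≤ n := by
    rw [← hspan]
    calc finrank ℝ (span ℝ (Set.range f)) ≤ (Set.range f).toFinset.card :=
          finrank_span_le_card _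
      _ = Fintype.card (Set.range f) := Set.toFinset_card _
      _ ≤ Fintype.card (Fin n) := Fintype.card_range_le f
      _ = n := Fintype.card_fin n
  haveI hfdS : FiniteDimensional ℝ (span ℝ (Set.range f)) :=
    FiniteDimensional.span_of_finite ℝ (Set.finite_range f)
  let hsB : Basis (Fin k) ℝ (span ℝ (Set.range f)) :=
    (finBasis ℝ _).reindex (finCongr (by rw [hspan]))
  set g : Fin k → ((Fin n → ℝ) → ℝ) := fun j => (hsB j : (Fin n → ℝ) → ℝ) with hg
  set G : (Fin n → ℝ) → (Fin k → ℝ) := fun x j => g j x with hGdef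
  have hzero : ∀ x : Fin n → ℝ, F x = 0 → ∀ h ∈ span ℝ (Set.range f), h x = 0 := by
    intro x hx h hh
    induction hh using Submodule.span_induction with
    | mem h hmem =>
      obtain ⟨i, rfl⟩ := hmem
      rw [← hFdef x i, hx]; rfl
    | zero => rfl
    | add a c _ _ ha hc => show a x + c x = 0; rw [ha, hc, add_zero]
    | smul r a _ ha => show r * a x = 0; rw [ha, mul_zero]
  have hgs : ∀ j, ContDiff ℝ (⊤ : ℕ∞) (g j) := by
    intro j
    obtain ⟨a, ha⟩ := (mem_span_range_iff_exists_fun ℝ).mp (hsB j).2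
    have h2 : ContDiff ℝ (⊤ : ℕ∞) (fun x => ∑ i, a i * f i x) :=
      ContDiff.sum fun i _ => contDiff_const.mul (hfs i)
    have h3 : g j = fun x => ∑ i, a i * f i x := by
      funext x
      have h4 := congrFun ha x
      simp only [Finset.sum_apply, Pi.smul_apply, smul_eq_mul] at h4
      exact h4.symm
    rw [h3]; exact h2
  have hGs : ContDiff ℝ (⊤ : ℕ∞) G := contDiff_pi.2 fun j => hgs j
  have hmemf : ∀ i, f i ∈ span ℝ (Set.range f) := fun i => subset_span ⟨i, rfl⟩
  set C : Matrix (Fin n) (Fin k) ℝ := fun i j => hsB.repr ⟨f i, hmemf i⟩ j with hC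
  set L : (Fin k → ℝ) →L[ℝ] (Fin n → ℝ) := LinearMap.toContinuousLinearMap C.mulVecLin with hL
  have hLapp : ∀ v i, L v i = ∑ j, C i j * v j := by
    intro v i
    rw [hL]
    simp [Matrix.mulVecLin_apply, Matrix.mulVec, dotProduct]
  have hfi : ∀ i x, f i x = ∑ j, C i j * g j x := by
    intro i x
    have h1 := hsB.sum_repr ⟨f i, hmemf i⟩
    have h2 := congrArg (fun z : span ℝ (Set.range f) => (z : (Fin n → ℝ) → ℝ) x) h1
    simp only [AddSubmonoidClass.coe_finset_sum, SetLike.val_smul, Finset.sum_apply,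
      Pi.smul_apply, smul_eq_mul] at h2
    rw [← h2]
  have hFL : ∀ x, F x = L (G x) := by
    intro x; funext i
    rw [hFdef x i, hfi i x, hLapp]
  have hGd : ∀ x, HasFDerivAt G (fderiv ℝ G x) x := fun x =>
    ((hGs.differentiable (by simp)) x).hasFDerivAt
  have hDF : fderiv ℝ F x₀ = L.comp (fderiv ℝ G x₀) := by
    have h1 : HasFDerivAt F (L.comp (fderiv ℝ G x₀)) x₀ := by
      have h2 := (L.hasFDerivAt).comp x₀ (hGd x₀)
      have h3 : F = fun x => L (G x) := funext hFL
      rw [h3]; exact h2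
    exact h1.fderiv
  have hrangeG : finrank ℝ (LinearMap.range (fderiv ℝ G x₀ : (Fin n → ℝ) →ₗ[ℝ] (Fin k → ℝ))) = k := by
    have hmap : LinearMap.range (fderiv ℝ F x₀ : (Fin n → ℝ) →ₗ[ℝ] (Fin n → ℝ))
        = Submodule.map (L : (Fin k → ℝ) →ₗ[ℝ] (Fin n → ℝ))
            (LinearMap.range (fderiv ℝ G x₀ : (Fin n → ℝ) →ₗ[ℝ] (Fin k → ℝ))) := by
      rw [hDF]
      ext y
      simp only [LinearMap.mem_range, Submodule.mem_map, ContinuousLinearMap.coe_comp',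
        Function.comp_apply, ContinuousLinearMap.coe_coe]
      constructor
      · rintro ⟨v, rfl⟩; exact ⟨_, ⟨v, rfl⟩, rfl⟩
      · rintro ⟨z, ⟨v, rfl⟩, rfl⟩; exact ⟨v, rfl⟩
    have hle1 : k ≤ finrank ℝ (LinearMap.range (fderiv ℝ G x₀ : (Fin n → ℝ) →ₗ[ℝ] (Fin k → ℝ))) := by
      have h4 := Submodule.finrank_map_le (L : (Fin k → ℝ) →ₗ[ℝ] (Fin n → ℝ))
        (LinearMap.range (fderiv ℝ G x₀ : (Fin n → ℝ) →ₗ[ℝ] (Fin k → ℝ)))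
      rw [← hmap, hrank_eq] at h4
      exact h4
    have hle2 : finrank ℝ (LinearMap.range (fderiv ℝ G x₀ : (Fin n → ℝ) →ₗ[ℝ] (Fin k → ℝ))) ≤ k := by
      have h := Submodule.finrank_le (LinearMap.range (fderiv ℝ G x₀ : (Fin n → ℝ) →ₗ[ℝ] (Fin k → ℝ)))
      simpa [Module.finrank_pi] using h
    omega
  set K := LinearMap.ker (fderiv ℝ G x₀ : (Fin n → ℝ) →ₗ[ℝ] (Fin k → ℝ)) with hKdef
  have hKrank : finrank ℝ K = n - k := by
    rw [hKdef]
    have h1 := LinearMap.finrank_range_add_finrank_ker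
      ((fderiv ℝ G x₀) : (Fin n → ℝ) →ₗ[ℝ] (Fin k → ℝ))
    rw [Module.finrank_pi] at h1
    simp only [Fintype.card_fin] at h1
    have h2 : LinearMap.range ((fderiv ℝ G x₀) : (Fin n → ℝ) →ₗ[ℝ] (Fin k → ℝ))
        = LinearMap.range (fderiv ℝ G x₀ : (Fin n → ℝ) →ₗ[ℝ] (Fin k → ℝ)) := rfl
    have h3 : LinearMap.ker ((fderiv ℝ G x₀) : (Fin n → ℝ) →ₗ[ℝ] (Fin k → ℝ))
        = LinearMap.ker (fderiv ℝ G x₀ : (Fin n → ℝ) →ₗ[ℝ] (Fin k → ℝ)) := rfl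
    rw [h2, h3, hrangeG] at h1
    omega
  obtain ⟨K', hK'⟩ := Submodule.exists_isCompl K
  set π := Submodule.linearProjOfIsCompl K K' hK' with hπ
  let BK : Basis (Fin (n - k)) ℝ K := (finBasis ℝ K).reindex (finCongr (by rw [hKrank]))
  set P : (Fin n → ℝ) →L[ℝ] (Fin (n - k) → ℝ) :=
    LinearMap.toContinuousLinearMap (BK.equivFun.toLinearMap ∘ₗ π) with hP
  have hPapp : ∀ v, P v = BK.equivFun (π v) := by
    intro v; rw [hP]; simp
  have hPinj : ∀ v ∈ K, P v = 0 → v = 0 := by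
    intro v hv h0
    have h1 : π v = ⟨v, hv⟩ := Submodule.linearProjOfIsCompl_apply_left hK' ⟨v, hv⟩
    have h2 : BK.equivFun (π v) = 0 := by rw [← hPapp]; exact h0
    have h3 : π v = 0 := by
      apply BK.equivFun.injective; rw [h2]; simp
    rw [h1] at h3
    simpa using congrArg Subtype.val h3
  -- the coordinate-insertion maps
  obtain ⟨E₁, hE₁a, hE₁b⟩ : ∃ E₁ : (Fin (n - k) → ℝ) →L[ℝ] (Fin n → ℝ),
      (∀ v (i : Fin n) (t : Fin (n - k)), (t : ℕ) = (i : ℕ) → E₁ v i = v t) ∧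
      (∀ v (i : Fin n), n - k ≤ (i : ℕ) → E₁ v i = 0) := by
    refine ⟨ContinuousLinearMap.pi (fun i : Fin n =>
      if h : (i : ℕ) < n - k then (ContinuousLinearMap.proj (⟨(i : ℕ), h⟩ : Fin (n - k)))
      else 0), ?_, ?_⟩
    · intro v i t ht
      have h : (i : ℕ) < n - k := ht ▸ t.isLt
      simp only [ContinuousLinearMap.pi_apply, dif_pos h, ContinuousLinearMap.proj_apply]
      congr 1
      exact Fin.ext ht.symm
    · intro v i hi
      simp [ContinuousLinearMap.pi_apply, dif_neg (by omega : ¬ (i : ℕ) < n - k)]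
  obtain ⟨E₂, hE₂a, hE₂b⟩ : ∃ E₂ : (Fin k → ℝ) →L[ℝ] (Fin n → ℝ),
      (∀ v (i : Fin n) (j : Fin k), (j : ℕ) + (n - k) = (i : ℕ) → E₂ v i = v j) ∧
      (∀ v (i : Fin n), (i : ℕ) < n - k → E₂ v i = 0) := by
    refine ⟨ContinuousLinearMap.pi (fun i : Fin n =>
      if h : n - k ≤ (i : ℕ) then
        (if h2 : (i : ℕ) - (n - k) < k then
          (ContinuousLinearMap.proj (⟨(i : ℕ) - (n - k), h2⟩ : Fin k)) else 0)
      else 0), ?_, ?_⟩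
    · intro v i j hj
      have h : n - k ≤ (i : ℕ) := by omega
      have h2 : (i : ℕ) - (n - k) < k := by have := j.isLt; omega
      simp only [ContinuousLinearMap.pi_apply, dif_pos h, dif_pos h2,
        ContinuousLinearMap.proj_apply]
      have hje : (⟨(i : ℕ) - (n - k), h2⟩ : Fin k) = j := by
        apply Fin.ext
        show (i : ℕ) - (n - k) = (j : ℕ)
        omega
      rw [hje]
    · intro v i hi
      rw [ContinuousLinearMap.pi_apply, dif_neg (by omega : ¬ n - k ≤ (i : ℕ))]
      rfl
  set C₁ : (Fin n → ℝ) →L[ℝ] (Fin n → ℝ) := E₁.comp P with hC₁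
  set Mder : (Fin n → ℝ) → ((Fin n → ℝ) →L[ℝ] (Fin n → ℝ)) :=
    fun x => C₁ + E₂.comp (fderiv ℝ G x) with hMder
  have hMapp : ∀ x v i, Mder x v i = E₁ (P v) i + E₂ (fderiv ℝ G x v) i := by
    intro x v i
    simp [hMder, hC₁, ContinuousLinearMap.add_apply, ContinuousLinearMap.comp_apply]
  have hMcont : Continuous Mder := by
    apply Continuous.add continuous_const
    exact Continuous.clm_comp continuous_const (hGs.continuous_fderiv (by simp))
  set U₀ : Set (Fin n → ℝ) := Mder ⁻¹' {T | IsUnit T} with hU₀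
  have hU₀open : IsOpen U₀ := Units.isOpen.preimage hMcont
  have hx₀U₀ : x₀ ∈ U₀ := by
    have hinj0 : ∀ v, Mder x₀ v = 0 → v = 0 := by
      intro v hv
      have hDGv : fderiv ℝ G x₀ v = 0 := by
        funext j
        have hjn : (j : ℕ) + (n - k) < n := by have := j.isLt; omega
        have h := congrFun hv ⟨(j : ℕ) + (n - k), hjn⟩
        rw [hMapp] at h
        rw [hE₁b _ _ (by show n - k ≤ (j : ℕ) + (n - k); omega),
          hE₂a _ _ j rfl] at h
        simpa using h
      have hvK : v ∈ K := by rw [hKdef]; exact LinearMap.mem_ker.mpr hDGv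
      apply hPinj v hvK
      funext t
      have htn : (t : ℕ) < n := by have := t.isLt; omega
      have h := congrFun hv ⟨(t : ℕ), htn⟩
      rw [hMapp] at h
      rw [hE₁a _ _ t rfl, hE₂b _ _ t.isLt] at h
      simpa using h
    have hinj : Function.Injective (Mder x₀) := by
      intro a' b' hab
      have h1 : Mder x₀ (a' - b') = 0 := by rw [map_sub, hab, sub_self]
      exact sub_eq_zero.mp (hinj0 _ h1)
    have hsurj : Function.Surjective (Mder x₀) :=
      (LinearMap.injective_iff_surjective
        (f := ((Mder x₀) : (Fin n → ℝ) →ₗ[ℝ] (Fin n → ℝ)))).mp hinj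
    let e : (Fin n → ℝ) ≃L[ℝ] (Fin n → ℝ) :=
      LinearEquiv.toContinuousLinearEquiv
        (LinearEquiv.ofBijective ((Mder x₀) : (Fin n → ℝ) →ₗ[ℝ] (Fin n → ℝ)) ⟨hinj, hsurj⟩)
    have he : (e : (Fin n → ℝ) →L[ℝ] (Fin n → ℝ)) = Mder x₀ := by
      ext v; rfl
    show IsUnit (Mder x₀)
    rw [← he]
    exact ⟨e.toUnit, rfl⟩
  refine ⟨U₀, hU₀open, hx₀U₀, ?_⟩
  rintro s' ⟨hs'U, hs'F⟩
  have hFs' : F s' = 0 := hs'F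
  have hGzero : ∀ x, F x = 0 → G x = 0 := by
    intro x hx; funext j; exact hzero x hx (g j) (hsB j).2
  have hzeroG : ∀ x, G x = 0 → F x = 0 := by
    intro x hx; rw [hFL x, hx, map_zero]
  set φ : (Fin n → ℝ) → (Fin n → ℝ) := fun z => (C₁ z - C₁ s') + E₂ (G z) with hφ
  have hφs : ContDiff ℝ (⊤ : ℕ∞) φ := (C₁.contDiff.sub contDiff_const).add (E₂.contDiff.comp hGs)
  have hφd : ∀ x, HasFDerivAt φ (Mder x) x := by
    intro x
    have h1 : HasFDerivAt (fun z : Fin n → ℝ => C₁ z - C₁ s') C₁ x :=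
      (C₁.hasFDerivAt).sub_const _
    have h2 : HasFDerivAt (fun z => E₂ (G z)) (E₂.comp (fderiv ℝ G x)) x :=
      (E₂.hasFDerivAt).comp x (hGd x)
    exact h1.add h2
  -- value of φ on high coordinates
  have hφhigh : ∀ x (i : Fin n), n - k ≤ (i : ℕ) → ∀ j : Fin k,
      (j : ℕ) + (n - k) = (i : ℕ) → φ x i = G x j := by
    intro x i hi j hj
    rw [hφ]
    simp only [Pi.add_apply, Pi.sub_apply]
    rw [hC₁]
    simp only [ContinuousLinearMap.comp_apply]
    rw [hE₁b _ _ hi, hE₁b _ _ hi, hE₂a _ _ j hj]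
    ring
  -- invertibility at s'
  have hUnit : IsUnit (Mder s') := hs'U
  let N : (Fin n → ℝ) ≃L[ℝ] (Fin n → ℝ) := ContinuousLinearEquiv.ofUnit hUnit.unit
  have hN : (N : (Fin n → ℝ) →L[ℝ] (Fin n → ℝ)) = Mder s' := by
    refine ContinuousLinearMap.ext fun v => ?_
    show (hUnit.unit : (Fin n → ℝ) →L[ℝ] (Fin n → ℝ)) v = Mder s' v
    rw [IsUnit.unit_spec]
  have hstrict : HasStrictFDerivAt φ ((N : (Fin n → ℝ) →L[ℝ] (Fin n → ℝ))) s' := by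
    rw [hN]
    exact hφs.contDiffAt.hasStrictFDerivAt' (hφd s') (by simp)
  set h := hstrict.toOpenPartialHomeomorph φ with hh
  have hcoe : ⇑h = φ := hstrict.toOpenPartialHomeomorph_coe
  have hsource : s' ∈ h.source := hstrict.mem_toOpenPartialHomeomorph_source
  set U₂ : Set (Fin n → ℝ) := h.source ∩ U₀ with hU₂
  have hU₂open : IsOpen U₂ := h.open_source.inter hU₀open
  have hU₂sub : U₂ ⊆ h.source := Set.inter_subset_left
  set V : Set (Fin n → ℝ) := φ '' U₂ with hV
  have hVeq : V = h.target ∩ h.symm ⁻¹' U₂ := by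
    rw [hV, ← hcoe]
    exact h.image_eq_target_inter_inv_preimage hU₂sub
  have hVopen : IsOpen V := by
    rw [hVeq]
    exact h.isOpen_inter_preimage_symm hU₂open
  set ψ : (Fin n → ℝ) → (Fin n → ℝ) := ⇑h.symm with hψ
  have hleft : ∀ x ∈ U₂, ψ (φ x) = x := by
    intro x hx
    rw [← hcoe]
    exact h.left_inv (hU₂sub hx)
  have hright : ∀ y ∈ V, φ (ψ y) = y := by
    rintro y ⟨x, hx, rfl⟩
    rw [hleft x hx]
  have hmapsto : ∀ x ∈ U₂, φ x ∈ V := fun x hx => Set.mem_image_of_mem φ hx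
  have hψmem : ∀ y ∈ V, ψ y ∈ U₂ := by
    rintro y ⟨x, hx, rfl⟩
    rw [hleft x hx]; exact hx
  have hbij : Set.BijOn φ U₂ V := by
    refine ⟨hmapsto, ?_, fun y hy => hy⟩
    intro a' ha' b' hb' hab
    have := hleft a' ha'
    rw [hab, hleft b' hb'] at this
    exact this.symm
  -- smoothness of ψ on V
  have hψs : ContDiffOn ℝ (⊤ : ℕ∞) ψ V := by
    intro y hy
    obtain ⟨x, hx, rfl⟩ := hy
    have hxU₀ : x ∈ U₀ := hx.2
    have hUnitx : IsUnit (Mder x) := hxU₀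
    let Nx : (Fin n → ℝ) ≃L[ℝ] (Fin n → ℝ) := ContinuousLinearEquiv.ofUnit hUnitx.unit
    have hNx : (Nx : (Fin n → ℝ) →L[ℝ] (Fin n → ℝ)) = Mder x := by
      refine ContinuousLinearMap.ext fun v => ?_
      show (hUnitx.unit : (Fin n → ℝ) →L[ℝ] (Fin n → ℝ)) v = Mder x v
      rw [IsUnit.unit_spec]
    have hyT : φ x ∈ h.target := by
      rw [← hcoe]; exact h.map_source (hU₂sub hx)
    have hsymm : h.symm (φ x) = x := by
      rw [← hcoe]; exact h.left_inv (hU₂sub hx)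
    have hder : HasFDerivAt (⇑h) ((Nx : (Fin n → ℝ) →L[ℝ] (Fin n → ℝ))) (h.symm (φ x)) := by
      rw [hcoe, hsymm, hNx]; exact hφd x
    have hcd : ContDiffAt ℝ (⊤ : ℕ∞) (⇑h) (h.symm (φ x)) := by
      rw [hcoe]; exact hφs.contDiffAt
    exact (h.contDiffAt_symm hyT hder hcd).contDiffWithinAt
  -- φ s' = 0
  have hGs' : G s' = 0 := hGzero s' hFs'
  have hφs' : φ s' = 0 := by
    rw [hφ]
    simp [hGs']
  refine ⟨U₂, V, φ, ψ, hU₂open, ⟨hsource, hs'U⟩, hVopen, hφs.contDiffOn, hψs, hbij,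
    hleft, hright, hφs', ?_⟩
  ext y
  constructor
  · rintro ⟨x, ⟨hxU₂, hxF⟩, rfl⟩
    have hxF0 : F x = 0 := hxF
    have hGx : G x = 0 := hGzero x hxF0
    refine ⟨hmapsto x hxU₂, ?_⟩
    intro i hi
    have hj : ∃ j : Fin k, (j : ℕ) + (n - k) = (i : ℕ) := by
      refine ⟨⟨(i : ℕ) - (n - k), by have := i.isLt; omega⟩, by have := i.isLt; simp; omega⟩
    obtain ⟨j, hj⟩ := hj
    rw [hφhigh x i hi j hj, hGx]
    rfl
  · rintro ⟨hyV, hy0⟩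
    obtain ⟨x, hxU₂, rfl⟩ := hyV
    have hGx : G x = 0 := by
      funext j
      have hjn : (j : ℕ) + (n - k) < n := by have := j.isLt; omega
      have hi : n - k ≤ (((⟨(j : ℕ) + (n - k), hjn⟩ : Fin n)) : ℕ) := by simp
      rw [← hφhigh x ⟨(j : ℕ) + (n - k), hjn⟩ hi j (by simp)]
      exact hy0 _ hi
    have hFx : F x = 0 := hzeroG x hGx
    exact ⟨x, ⟨hxU₂, hFx⟩, rfl⟩
end

section
/- Let P and Z be disjoint index sets with P ∪ Z = {1,…,n}, let W be a real n×n matrix with block decomposition W = [[W_P, W_PZ],[W_ZP, W_Z]] with respect to (P, Z), where W_P is symmetric and every eigenvalue of W_P is at most 1, and the eigenvalue 1 of W_P has geometric multiplicity m (the kernel of W_P − I_p has dimension m). Let b ∈ ℝ^n with b_i = 0 for all i ∈ P, and let x* ∈ ℝ^n satisfy: W_P x*_P = x*_P, x*_Z = W_ZP x*_P + b_Z, (x*_P)_k > 0 for every k ∈ P, and (x*_Z)_k < 0 for every k ∈ Z. Let E = {x ∈ ℝ^n : −x + W·ReLU(x) + b = 0} be the equilibrium set of the ReLU recurrent network. Then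 there exist an open set U ∋ x*, an open set V ⊆ ℝ^n, and a C^∞ diffeomorphism φ : U → V with φ(x*) = 0 and φ(U ∩ E) = V ∩ (ℝ^{m} × {0}^{n−m}); that is, near x* the equilibrium set E is an m-dimensional C^∞ submanifold of ℝ^n. -/
open Module Submodule

section Aux

lemma aux_exists_equiv {E : Type*} [AddCommGroup E] [Module ℝ E] [FiniteDimensional ℝ E]
    (S T : Submodule ℝ E) (h : Module.finrank ℝ S = Module.finrank ℝ T) :
    ∃ L : E ≃ₗ[ℝ] E, ∀ w, L w ∈ T ↔ w ∈ S := by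
  obtain ⟨S', hS⟩ := Submodule.exists_isCompl S
  obtain ⟨T', hT⟩ := Submodule.exists_isCompl T
  have h' : Module.finrank ℝ S' = Module.finrank ℝ T' := by
    have e1 := Submodule.finrank_add_eq_of_isCompl hS
    have e2 := Submodule.finrank_add_eq_of_isCompl hT
    omega
  let f : S ≃ₗ[ℝ] T := LinearEquiv.ofFinrankEq _ _ h
  let g : S' ≃ₗ[ℝ] T' := LinearEquiv.ofFinrankEq _ _ h'
  let L : E ≃ₗ[ℝ] E :=
    ((Submodule.prodEquivOfIsCompl S S' hS).symm : E ≃ₗ[ℝ] (S × S')).trans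
      ((f.prodCongr g).trans (Submodule.prodEquivOfIsCompl T T' hT))
  have fwd : ∀ w ∈ S, L w ∈ T := by
    intro w hw
    have : (Submodule.prodEquivOfIsCompl S S' hS).symm w = ((⟨w, hw⟩ : ↥S), (0 : ↥S')) := by
      have := Submodule.prodEquivOfIsCompl_symm_apply_left (p := S) (q := S') hS (⟨w, hw⟩ : ↥S)
      simpa using this
    simp only [L, LinearEquiv.trans_apply, this, LinearEquiv.prodCongr_apply, Prod.map,
      Submodule.coe_prodEquivOfIsCompl' , map_zero]
    simpa using (f (⟨w, hw⟩ : ↥S)).2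
  have hmap : Submodule.map (L : E →ₗ[ℝ] E) S = T := by
    apply Submodule.eq_of_le_of_finrank_eq
    · rintro _ ⟨w, hw, rfl⟩; exact fwd w hw
    · rw [LinearEquiv.finrank_map_eq]; exact h
  refine ⟨L, fun w => ⟨fun hw => ?_, fwd w⟩⟩
  rw [← hmap] at hw
  obtain ⟨s, hs, hsw⟩ := hw
  have : s = w := L.injective hsw
  exact this ▸ hs

end Aux

/-- Let `P, Z` partition `{1,…,n}`, let `W` be a real `n×n` matrix whose
`P×P` block `W_P` is symmetric with all eigenvalues `≤ 1` and with eigenvalue `1` of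
geometric multiplicity `m`, let `b` vanish on the `P`-coordinates, and let `x*` satisfy
`W_P x*_P = x*_P`, `x*_Z = W_ZP x*_P + b_Z`, `x* i > 0` for `i ∈ P`, `x* i < 0` for `i ∈ Z`.
Then near `x*` the equilibrium set `E = {x : −x + W·ReLU(x) + b = 0}` is an `m`-dimensional
`C^∞` submanifold of `ℝ^n`: there is a `C^∞` diffeomorphism `φ` between open sets, defined
near `x*`, with `φ x* = 0`, flattening `E` onto the slice `ℝ^m × {0}^{n−m}`. -/
theorem statement11 {n m : ℕ}
    (P Z : Finset (Fin n)) (hdisj : Disjoint P Z) (hunion : P ∪ Z = Finset.univ)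
    (W : Matrix (Fin n) (Fin n) ℝ)
    (W_P : Matrix ↥P ↥P ℝ)
    (hWP : W_P = W.submatrix (fun i : ↥P => (i : Fin n)) (fun j : ↥P => (j : Fin n)))
    (hsymm : W_P.IsSymm)
    (heig : ∀ μ : ℝ, Module.End.HasEigenvalue W_P.mulVecLin μ → μ ≤ 1)
    (hmult : Module.finrank ℝ (LinearMap.ker (W_P - 1).mulVecLin) = m)
    (b : Fin n → ℝ) (hbP : ∀ i ∈ P, b i = 0)
    (x : Fin n → ℝ)
    (h1 : ∀ i ∈ P, (∑ j ∈ P, W i j * x j) = x i)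
    (h2 : ∀ i ∈ Z, x i = (∑ j ∈ P, W i j * x j) + b i)
    (h3 : ∀ i ∈ P, 0 < x i)
    (h4 : ∀ i ∈ Z, x i < 0)
    (E : Set (Fin n → ℝ))
    (hE : E = {y : Fin n → ℝ | -y + W.mulVec (fun i => max (y i) 0) + b = 0}) :
    ∃ (U V : Set (Fin n → ℝ)) (φ ψ : (Fin n → ℝ) → (Fin n → ℝ)),
      IsOpen U ∧ x ∈ U ∧ IsOpen V ∧
      ContDiffOn ℝ (⊤ : ℕ∞) φ U ∧ ContDiffOn ℝ (⊤ : ℕ∞) ψ V ∧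
      Set.BijOn φ U V ∧
      (∀ y ∈ U, ψ (φ y) = y) ∧ (∀ y ∈ V, φ (ψ y) = y) ∧
      φ x = 0 ∧
      φ '' (U ∩ E) = V ∩ {y : Fin n → ℝ | ∀ i : Fin n, m ≤ (i : ℕ) → y i = 0} := by
  classical
  -- every index is in P or Z
  have hPZ : ∀ i : Fin n, i ∈ P ∨ i ∈ Z := by
    intro i
    have : i ∈ P ∪ Z := hunion ▸ Finset.mem_univ i
    exact Finset.mem_union.mp this
  -- the matrix M and the subspace S
  set M : Matrix (Fin n) (Fin n) ℝ := fun i j => if j ∈ P then W i j else 0 with hM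
  have hMv : ∀ (v : Fin n → ℝ) (i : Fin n), M.mulVec v i = ∑ j ∈ P, W i j * v j := by
    intro v i
    simp only [Matrix.mulVec, dotProduct, hM, ite_mul, zero_mul]
    rw [Finset.sum_ite_mem, Finset.univ_inter]
  set S : Submodule ℝ (Fin n → ℝ) := LinearMap.ker (1 - M).mulVecLin with hS
  have memS : ∀ v : Fin n → ℝ, v ∈ S ↔ ∀ i, v i = ∑ j ∈ P, W i j * v j := by
    intro v
    rw [hS, LinearMap.mem_ker, Matrix.mulVecLin_apply, Matrix.sub_mulVec, Matrix.one_mulVec,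
      sub_eq_zero]
    constructor
    · intro h i; rw [← hMv v i]; exact congrFun h i
    · intro h; funext i; rw [hMv v i]; exact h i
  -- finrank S = m via the restriction equivalence
  have hfinS : Module.finrank ℝ S = m := by
    set K := LinearMap.ker (W_P - 1).mulVecLin with hK
    have memK : ∀ u : ↥P → ℝ, u ∈ K ↔ ∀ i : ↥P, (∑ j : ↥P, W i j * u j) = u i := by
      intro u
      rw [hK, LinearMap.mem_ker, Matrix.mulVecLin_apply, Matrix.sub_mulVec, Matrix.one_mulVec,
        sub_eq_zero]
      constructor
      · intro h i
        have := congrFun h i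
        simp only [Matrix.mulVec, dotProduct, hWP, Matrix.submatrix_apply] at this
        exact this
      · intro h; funext i
        simp only [Matrix.mulVec, dotProduct, hWP, Matrix.submatrix_apply]
        exact h i
    -- the restriction map
    have hres : ∀ v ∈ S, (fun i : ↥P => v i) ∈ K := by
      intro v hv
      rw [memK]
      intro i
      have hvi := (memS v).mp hv i
      rw [← Finset.sum_coe_sort P (fun j => W i j * v j)] at hvi
      exact hvi.symm
    let r : S →ₗ[ℝ] K :=
      LinearMap.codRestrict K
        ((LinearMap.funLeft ℝ ℝ (fun i : ↥P => (i : Fin n))).comp S.subtype)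
        (fun v => hres v v.2)
    have hrinj : Function.Injective r := by
      intro v w hvw
      have hvw' : ∀ i : ↥P, (v : Fin n → ℝ) i = (w : Fin n → ℝ) i := by
        intro i
        exact congrFun (congrArg Subtype.val hvw) i
    -- values on P agree, hence everywhere by the defining equations
      apply Subtype.ext
      funext i
      have hv := (memS v).mp v.2 i
      have hw := (memS w).mp w.2 i
      rw [hv, hw]
      apply Finset.sum_congr rfl
      intro j hj
      rw [hvw' ⟨j, hj⟩]
    have hrsurj : Function.Surjective r := by
      intro u
      set v : Fin n → ℝ := fun i => ∑ j : ↥P, W i (j : Fin n) * (u : ↥P → ℝ) j with hv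
      have hvP : ∀ j : ↥P, v (j : Fin n) = (u : ↥P → ℝ) j := by
        intro j
        rw [hv]
        exact (memK u).mp u.2 j
      have hvS : v ∈ S := by
        rw [memS]
        intro i
        rw [← Finset.sum_coe_sort P (fun j => W i j * v j)]
        calc v i = ∑ j : ↥P, W i (j : Fin n) * (u : ↥P → ℝ) j := by rw [hv]
        _ = ∑ j : ↥P, W i (j : Fin n) * v (j : Fin n) := by
              apply Finset.sum_congr rfl
              intro j _
              rw [hvP j]
      refine ⟨⟨v, hvS⟩, ?_⟩
      apply Subtype.ext
      funext i
      exact hvP i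
    have : Module.finrank ℝ S = Module.finrank ℝ K :=
      LinearEquiv.finrank_eq (LinearEquiv.ofBijective r ⟨hrinj, hrsurj⟩)
    rw [this, ← hK] at *
    exact hmult
  -- m ≤ n
  have hmn : m ≤ n := by
    have h1' : Module.finrank ℝ (LinearMap.ker (W_P - 1).mulVecLin) ≤
        Module.finrank ℝ (↥P → ℝ) := Submodule.finrank_le _
    rw [hmult] at h1'
    have h2' : Module.finrank ℝ (↥P → ℝ) = P.card := by
      rw [Module.finrank_pi]
      simp
    have h3' : P.card ≤ n := by
      have := Finset.card_le_card (Finset.subset_univ P)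
      simpa using this
    omega
  -- the slice subspace T
  set T : Submodule ℝ (Fin n → ℝ) :=
    { carrier := {y | ∀ i : Fin n, m ≤ (i : ℕ) → y i = 0}
      add_mem' := fun ha hb i hi => by simp [ha i hi, hb i hi]
      zero_mem' := fun i _ => rfl
      smul_mem' := fun c y hy i hi => by simp [hy i hi] } with hT
  have memT : ∀ y : Fin n → ℝ, y ∈ T ↔ ∀ i : Fin n, m ≤ (i : ℕ) → y i = 0 := fun y => Iff.rfl
  -- finrank T = m
  have hfinT : Module.finrank ℝ T = m := by
    let ext : (Fin m → ℝ) →ₗ[ℝ] (Fin n → ℝ) :=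
      { toFun := fun u => fun i => if h : (i : ℕ) < m then u ⟨i, h⟩ else 0
        map_add' := by
          intro u v; funext i; by_cases h : (i : ℕ) < m <;> simp [h]
        map_smul' := by
          intro c u; funext i; by_cases h : (i : ℕ) < m <;> simp [h] }
    have hextT : ∀ u, ext u ∈ T := by
      intro u
      rw [memT]
      intro i hi
      simp only [ext, LinearMap.coe_mk, AddHom.coe_mk]
      rw [dif_neg (by omega)]
    let e : (Fin m → ℝ) →ₗ[ℝ] T := LinearMap.codRestrict T ext hextT
    have heinj : Function.Injective e := by
      intro u v huv
      funext k
      have := congrFun (congrArg Subtype.val huv) ⟨(k : ℕ), lt_of_lt_of_le k.2 hmn⟩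
      simp only [ext, e, LinearMap.codRestrict_apply, LinearMap.coe_mk, AddHom.coe_mk] at this
      rw [dif_pos k.2, dif_pos k.2] at this
      simpa using this
    have hesurj : Function.Surjective e := by
      rintro ⟨y, hy⟩
      refine ⟨fun k => y ⟨(k : ℕ), lt_of_lt_of_le k.2 hmn⟩, ?_⟩
      apply Subtype.ext
      funext i
      simp only [ext, e, LinearMap.codRestrict_apply, LinearMap.coe_mk, AddHom.coe_mk]
      by_cases h : (i : ℕ) < m
      · rw [dif_pos h]
      · rw [dif_neg h]
        exact ((memT y).mp hy i (le_of_not_gt h)).symm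
    have : Module.finrank ℝ (Fin m → ℝ) = Module.finrank ℝ T :=
      LinearEquiv.finrank_eq (LinearEquiv.ofBijective e ⟨heinj, hesurj⟩)
    rw [← this]
    simp
  -- the automorphism L with L w ∈ T ↔ w ∈ S
  obtain ⟨L, hL⟩ := aux_exists_equiv S T (by rw [hfinS, hfinT])
  -- the open set U
  set U : Set (Fin n → ℝ) := {y | (∀ i ∈ P, 0 < y i) ∧ ∀ i ∈ Z, y i < 0} with hU
  have hUopen : IsOpen U := by
    have : U = (⋂ i ∈ P, (fun y : Fin n → ℝ => y i) ⁻¹' Set.Ioi 0) ∩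
        ⋂ i ∈ Z, (fun y : Fin n → ℝ => y i) ⁻¹' Set.Iio 0 := by
      ext y
      simp [hU, Set.mem_iInter]
    rw [this]
    exact (isOpen_biInter_finset fun i _ => isOpen_Ioi.preimage (continuous_apply i)).inter
      (isOpen_biInter_finset fun i _ => isOpen_Iio.preimage (continuous_apply i))
  have hxU : x ∈ U := ⟨h3, h4⟩
  -- x satisfies the affine equations everywhere
  have hxeq : ∀ i, x i = (∑ j ∈ P, W i j * x j) + b i := by
    intro i
    rcases hPZ i with hi | hi
    · rw [hbP i hi, h1 i hi, add_zero]
    · exact h2 i hi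
  -- local characterization of E on U
  have hEU : ∀ y ∈ U, (y ∈ E ↔ y - x ∈ S) := by
    intro y hy
    have hrelu : ∀ i, W.mulVec (fun j => max (y j) 0) i = ∑ j ∈ P, W i j * y j := by
      intro i
      have : W.mulVec (fun j => max (y j) 0) i = ∑ j, W i j * max (y j) 0 := rfl
      rw [this, ← hunion, Finset.sum_union hdisj]
      have hzero : ∑ j ∈ Z, W i j * max (y j) 0 = 0 := by
        apply Finset.sum_eq_zero
        intro j hj
        rw [max_eq_right (le_of_lt (hy.2 j hj))]
        ring
      have hpos : ∑ j ∈ P, W i j * max (y j) 0 = ∑ j ∈ P, W i j * y j := by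
        apply Finset.sum_congr rfl
        intro j hj
        rw [max_eq_left (le_of_lt (hy.1 j hj))]
      rw [hzero, hpos, add_zero]
    rw [hE, Set.mem_setOf_eq, funext_iff, memS]
    constructor
    · intro h i
      have hi := h i
      simp only [Pi.add_apply, Pi.neg_apply, Pi.zero_apply, hrelu i] at hi
      have hyi : y i = (∑ j ∈ P, W i j * y j) + b i := by linarith
      have hsub : ∑ j ∈ P, W i j * (y j - x j) =
          (∑ j ∈ P, W i j * y j) - ∑ j ∈ P, W i j * x j := by
        rw [← Finset.sum_sub_distrib]
        apply Finset.sum_congr rfl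
        intro j _
        ring
      have hx := hxeq i
      simp only [Pi.sub_apply]
      rw [hsub]
      linarith
    · intro h i
      have hi := h i
      simp only [Pi.sub_apply] at hi
      have hsub : ∑ j ∈ P, W i j * (y j - x j) =
          (∑ j ∈ P, W i j * y j) - ∑ j ∈ P, W i j * x j := by
        rw [← Finset.sum_sub_distrib]
        apply Finset.sum_congr rfl
        intro j _
        ring
      rw [hsub] at hi
      have hx := hxeq i
      simp only [Pi.add_apply, Pi.neg_apply, Pi.zero_apply, hrelu i]
      linarith
  -- the diffeomorphism
  set φ : (Fin n → ℝ) → (Fin n → ℝ) := fun y => L (y - x) with hφ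
  set ψ : (Fin n → ℝ) → (Fin n → ℝ) := fun y => L.symm y + x with hψ
  have hψφ : ∀ y, ψ (φ y) = y := by
    intro y; simp [hφ, hψ]
  have hφψ : ∀ y, φ (ψ y) = y := by
    intro y; simp [hφ, hψ]
  set V : Set (Fin n → ℝ) := φ '' U with hV
  have hVψ : V = ψ ⁻¹' U := by
    ext z
    constructor
    · rintro ⟨y, hy, rfl⟩
      simpa [hψφ y] using hy
    · intro hz
      exact ⟨ψ z, hz, hφψ z⟩
  have hψcont : Continuous ψ := by
    have : Continuous fun y : Fin n → ℝ => L.symm y :=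
      LinearMap.continuous_of_finiteDimensional L.symm.toLinearMap
    exact this.add continuous_const
  have hVopen : IsOpen V := by
    rw [hVψ]
    exact hUopen.preimage hψcont
  have hφcd : ContDiff ℝ (⊤ : WithTop ℕ∞) φ := by
    have hL' : ContDiff ℝ (⊤ : WithTop ℕ∞) fun y : Fin n → ℝ => L y :=
      (LinearMap.toContinuousLinearMap L.toLinearMap).contDiff
    exact hL'.comp (contDiff_id.sub contDiff_const)
  have hψcd : ContDiff ℝ (⊤ : WithTop ℕ∞) ψ := by
    have hL' : ContDiff ℝ (⊤ : WithTop ℕ∞) fun y : Fin n → ℝ => L.symm y :=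
      (LinearMap.toContinuousLinearMap L.symm.toLinearMap).contDiff
    exact hL'.add contDiff_const
  refine ⟨U, V, φ, ψ, hUopen, hxU, hVopen, (hφcd.of_le le_top).contDiffOn, (hψcd.of_le le_top).contDiffOn, ?_,
    fun y _ => hψφ y, fun y _ => hφψ y, ?_, ?_⟩
  · -- BijOn
    refine ⟨fun y hy => ⟨y, hy, rfl⟩, fun y _ z _ hyz => ?_, fun z hz => hz⟩
    have := congrArg ψ hyz
    rwa [hψφ, hψφ] at this
  · -- φ x = 0
    simp [hφ]
  · -- the image equality
    ext z
    constructor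
    · rintro ⟨y, ⟨hyU, hyE⟩, rfl⟩
      refine ⟨⟨y, hyU, rfl⟩, ?_⟩
      have : y - x ∈ S := (hEU y hyU).mp hyE
      have : φ y ∈ T := (hL (y - x)).mpr this
      exact (memT (φ y)).mp this
    · rintro ⟨⟨y, hyU, rfl⟩, hzT⟩
      have hT' : φ y ∈ T := (memT (φ y)).mpr hzT
      have hyS : y - x ∈ S := (hL (y - x)).mp hT'
      exact ⟨y, ⟨hyU, (hEU y hyU).mpr hyS⟩, rfl⟩
end
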